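/- arXiv:1802.05099 — 2 statements merged into one kernel-verified Lean document; each statement's English description precedes it below -/
import Mathlib

section
/- For unit vectors ψ̃₀ = (cos(π/K), sin(π/K)) and ψ̃₁ = (cos(π/K), -sin(π/K)) and λ = 1 + |cos(2π/K)|, the operator 1 - (1/λ)(|ψ̃₀^⊥⟩⟨ψ̃₀^⊥| + |ψ̃₁^⊥⟩⟨ψ̃₁^⊥|) is positive semidefinite, so that {(1/λ)|ψ̃₀^⊥⟩⟨ψ̃₀^⊥|, (1/λ)|ψ̃₁^⊥⟩⟨ψ̃₁^⊥|, 1 - (1/λ)(|ψ̃₀^⊥⟩⟨ψ̃₀^⊥| + |ψ̃₁^⊥⟩⟨ψ̃₁^⊥|)} is a valid POVM on ℂ². -/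
/-!
The cross terms of the two projectors cancel, so their sum is `diag(2 sin² x, 2 cos² x)` with
`x = π/K`, i.e. `diag(1 - cos 2x, 1 + cos 2x)`. Both entries are at most `λ = 1 + |cos 2x|`,
so subtracting `1/λ` times this diagonal matrix from the identity leaves a nonnegative diagonal.
-/

open Real Matrix

lemma Matrix.posSemidef_vecMulVec_self {n R : Type*} [Finite n] [CommRing R] [PartialOrder R]
    [StarRing R] [StarOrderedRing R] [TrivialStar R] (a : n → R) :
    (vecMulVec a a).PosSemidef := by
  simpa only [star_trivial] using posSemidef_vecMulVec_self_star a

lemma Matrix.posSemidef_one_sub_smul_diagonal {n : Type*} [Fintype n] [DecidableEq n]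
    {d : n → ℝ} {c : ℝ} (hc : 0 < c) (hd : ∀ i, d i ≤ c) :
    (1 - (1 / c) • diagonal d).PosSemidef := by
  rw [← diagonal_one, ← diagonal_smul, diagonal_sub, posSemidef_diagonal_iff]
  intro i
  rw [Pi.smul_apply, smul_eq_mul, one_div_mul_eq_div, sub_nonneg, div_le_one hc]
  exact hd i

lemma Matrix.vecMulVec_add_vecMulVec_reflect {R : Type*} [CommRing R] (s c : R) :
    vecMulVec ![-s, c] ![-s, c] + vecMulVec ![s, c] ![s, c] =
      diagonal ![2 * s ^ 2, 2 * c ^ 2] := by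
  ext i j
  fin_cases i <;> fin_cases j <;> simp <;> ring

lemma two_mul_sin_sq_le_one_add_abs_cos_two_mul (x : ℝ) :
    2 * sin x ^ 2 ≤ 1 + |cos (2 * x)| := by
  linarith [cos_two_mul' x, sin_sq_add_cos_sq x, neg_abs_le (cos (2 * x))]

lemma two_mul_cos_sq_le_one_add_abs_cos_two_mul (x : ℝ) :
    2 * cos x ^ 2 ≤ 1 + |cos (2 * x)| := by
  linarith [cos_two_mul x, le_abs_self (cos (2 * x))]

theorem povm_enhancement_valid_general (K : ℕ)
    (ψ0p ψ1p : Fin 2 → ℝ)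
    (hψ0p : ψ0p = ![-Real.sin (π / K), Real.cos (π / K)])
    (hψ1p : ψ1p = ![Real.sin (π / K), Real.cos (π / K)])
    (lam : ℝ) (hlam : lam = 1 + |Real.cos (2 * π / K)|)
    (P0 P1 Pfill : Matrix (Fin 2) (Fin 2) ℝ)
    (hP0 : P0 = (1 / lam) • vecMulVec ψ0p ψ0p)
    (hP1 : P1 = (1 / lam) • vecMulVec ψ1p ψ1p)
    (hPf : Pfill = 1 - (1 / lam) • (vecMulVec ψ0p ψ0p + vecMulVec ψ1p ψ1p)) :
    Pfill.PosSemidef ∧ P0.PosSemidef ∧ P1.PosSemidef ∧ P0 + P1 + Pfill = 1 := by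
  rw [mul_div_assoc] at hlam
  have hlam_pos : 0 < lam := by rw [hlam]; positivity
  subst hP0 hP1 hPf
  refine ⟨?_, (posSemidef_vecMulVec_self _).smul (by positivity),
    (posSemidef_vecMulVec_self _).smul (by positivity), by rw [smul_add]; abel⟩
  rw [hψ0p, hψ1p, vecMulVec_add_vecMulVec_reflect]
  refine posSemidef_one_sub_smul_diagonal hlam_pos fun i => ?_
  fin_cases i
  · simpa [hlam] using two_mul_sin_sq_le_one_add_abs_cos_two_mul (π / K)
  · simpa [hlam] using two_mul_cos_sq_le_one_add_abs_cos_two_mul (π / K)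

/-- With `λ = 1 + |cos(2π/K)|`, the three operators
`(1/λ)|ψ̃₀^⊥⟩⟨ψ̃₀^⊥|`, `(1/λ)|ψ̃₁^⊥⟩⟨ψ̃₁^⊥|` and
`1 - (1/λ)(|ψ̃₀^⊥⟩⟨ψ̃₀^⊥| + |ψ̃₁^⊥⟩⟨ψ̃₁^⊥|)` are all positive semidefinite and
sum to the identity, i.e. they form a valid POVM on ℂ² (here represented on ℝ²,
since all vectors are real). -/
theorem povm_enhancement_valid (K : ℕ) (hK : 3 ≤ K)
    (ψ0p ψ1p : Fin 2 → ℝ)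
    (hψ0p : ψ0p = ![-Real.sin (π / K), Real.cos (π / K)])
    (hψ1p : ψ1p = ![Real.sin (π / K), Real.cos (π / K)])
    (lam : ℝ) (hlam : lam = 1 + |Real.cos (2 * π / K)|)
    (P0 P1 Pfill : Matrix (Fin 2) (Fin 2) ℝ)
    (hP0 : P0 = (1 / lam) • vecMulVec ψ0p ψ0p)
    (hP1 : P1 = (1 / lam) • vecMulVec ψ1p ψ1p)
    (hPf : Pfill = 1 - (1 / lam) • (vecMulVec ψ0p ψ0p + vecMulVec ψ1p ψ1p)) :
    Pfill.PosSemidef ∧ P0.PosSemidef ∧ P1.PosSemidef ∧ P0 + P1 + Pfill = 1 :=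
  povm_enhancement_valid_general K ψ0p ψ1p hψ0p hψ1p lam hlam P0 P1 Pfill hP0 hP1 hPf
end

section
/- The filtering operator F = (1/√(2λ))((|ψ̃₀^⊥⟩ + |ψ̃₁^⊥⟩)⟨0| + (|ψ̃₀^⊥⟩ − |ψ̃₁^⊥⟩)⟨1|) with λ = 1 + |cos(2π/K)| satisfies F†F ≤ 1₂, i.e., 1₂ − F†F is positive semidefinite. -/
open Real Matrix

/-- The filtering operator
`F = (1/√(2λ))((|ψ̃₀^⊥⟩ + |ψ̃₁^⊥⟩)⟨0| + (|ψ̃₀^⊥⟩ − |ψ̃₁^⊥⟩)⟨1|)` with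
`λ = 1 + |cos(2π/K)|` satisfies `F†F ≤ 1₂`, i.e. `1₂ − F†F` is positive
semidefinite (all vectors being real, `F† = Fᵀ`). -/
theorem filter_contraction (K : ℕ) (hK : 3 ≤ K)
    (ψ0p ψ1p : Fin 2 → ℝ)
    (hψ0p : ψ0p = ![-Real.sin (π / K), Real.cos (π / K)])
    (hψ1p : ψ1p = ![Real.sin (π / K), Real.cos (π / K)])
    (lam : ℝ) (hlam : lam = 1 + |Real.cos (2 * π / K)|)
    (F : Matrix (Fin 2) (Fin 2) ℝ)
    (hF : F = (1 / Real.sqrt (2 * lam)) •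
        (vecMulVec (ψ0p + ψ1p) ![1, 0] + vecMulVec (ψ0p - ψ1p) ![0, 1])) :
    ((1 : Matrix (Fin 2) (Fin 2) ℝ) - Fᵀ * F).PosSemidef := by
  set c := Real.cos (π / K) with hc
  set s := Real.sin (π / K) with hs
  have hc2 : Real.cos (2 * π / K) = 2 * c ^ 2 - 1 := by
    rw [show (2 * π / (K : ℝ)) = 2 * (π / K) by ring, Real.cos_two_mul]
  have hlam' : lam = 1 + |2 * c ^ 2 - 1| := by rw [hlam, hc2]
  have hlam_pos : 0 < lam := by
    rw [hlam']; positivity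
  have hk2 : (1 / Real.sqrt (2 * lam)) ^ 2 = 1 / (2 * lam) := by
    rw [div_pow, one_pow, Real.sq_sqrt (by linarith)]
  have h00 : 2 * c ^ 2 ≤ lam := by
    rw [hlam']
    rcases abs_cases (2 * c ^ 2 - 1) with ⟨h, _⟩ | ⟨h, _⟩ <;> nlinarith [sq_nonneg c]
  have h11 : 2 * s ^ 2 ≤ lam := by
    have hcs : s ^ 2 + c ^ 2 = 1 := Real.sin_sq_add_cos_sq _
    rw [hlam']
    rcases abs_cases (2 * c ^ 2 - 1) with ⟨h, _⟩ | ⟨h, _⟩ <;> nlinarith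
  have hsq : Real.sqrt lam * Real.sqrt 2 * (Real.sqrt lam * Real.sqrt 2) = 2 * lam := by
    have h1 := Real.mul_self_sqrt hlam_pos.le
    have h2 := Real.mul_self_sqrt (show (0:ℝ) ≤ 2 by norm_num)
    nlinarith
  have hil : (Real.sqrt lam)⁻¹ * (Real.sqrt lam)⁻¹ = lam⁻¹ := by
    rw [← mul_inv, Real.mul_self_sqrt hlam_pos.le]
  have hi2 : ((Real.sqrt 2 : ℝ))⁻¹ * (Real.sqrt 2)⁻¹ = 2⁻¹ := by
    rw [← mul_inv, Real.mul_self_sqrt] <;> norm_num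
  have hM : ((1 : Matrix (Fin 2) (Fin 2) ℝ) - Fᵀ * F) =
      Matrix.diagonal ![1 - 2 * c ^ 2 / lam, 1 - 2 * s ^ 2 / lam] := by
    subst hF hψ0p hψ1p
    ext i j
    fin_cases i <;> fin_cases j <;>
      simp [Matrix.mul_apply, Matrix.vecMulVec_apply, Fin.sum_univ_two,
        Matrix.one_apply, Matrix.diagonal]
    · linear_combination (4 * c ^ 2 * (Real.sqrt 2)⁻¹ * (Real.sqrt 2)⁻¹) * hil +
        (4 * c ^ 2 * lam⁻¹) * hi2
    · linear_combination (4 * s ^ 2 * (Real.sqrt 2)⁻¹ * (Real.sqrt 2)⁻¹) * hil +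
        (4 * s ^ 2 * lam⁻¹) * hi2
  rw [hM]
  refine Matrix.posSemidef_diagonal_iff.mpr ?_
  intro i
  fin_cases i <;> simp <;>
    [skip; skip] <;> rw [div_le_one hlam_pos] <;> [exact h00; exact h11]
end
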